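/- (Proposition 4, β version.) Suppose there exists a switching matrix M such that M A_o M is eventually positive, and let μ := ρ(A_o), assuming μ > 0. Suppose λ ∈ σ(A_a) satisfies Im(λ) > 0, Re(λ) > 0, and λ, λ̄ are the leading eigenvalues of A_a: for every λ_a ∈ σ(A_a), Re(λ_a) ≤ Re(λ), with equality only if λ_a ∈ {λ, λ̄}. Suppose d > 0, u > 0, α ≥ 0, γ ≥ 0, δ ≥ 0 and γ + δμ > 0. Then there exists β* ≥ 0 such that for every β > β*: (i) for all λ_a ∈ σ(A_a) and μ_o ∈ σ(A_o) with (λ_a, μ_o) ∉ {(λ, μ), (λ̄, μ)}, one has Re(η(u, λ_a, μ_o)) < Re(η(u, λ, μ)); (ii) η(u, λ, μ) and η(u, λ̄, μ) = conj(η(u, λ, μ)) are eigenvalues of J(u) with nonzero imaginary part, i.e., the leading eigenvalues of J(u) are a non-real complex-conjugate pair; (iii) K := max_{λ'∈σ(A_a), μ'∈σ(A_o)} Re(α + γλ' + βμ' + δλ'μ') equals α + γRe(λ) + βμ + δμRe(λ) and is strictly positive. -/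

import Mathlib

open Matrix Complex Polynomial
open scoped Kronecker

/-- The complex spectrum of a real square matrix: the set of complex roots of its
characteristic polynomial. -/
noncomputable def specC {n : Type*} [Fintype n] [DecidableEq n]
    (M : Matrix n n ℝ) : Set ℂ :=
  {z : ℂ | ((M.map (Complex.ofReal)).charpoly).IsRoot z}

/-- The Jacobian matrix `J(u)` of the belief dynamics at the origin. -/
noncomputable def Jmat {Na No : ℕ}
    (Aa : Matrix (Fin Na) (Fin Na) ℝ) (Ao : Matrix (Fin No) (Fin No) ℝ)
    (d u α γ β δ : ℝ) : Matrix (Fin Na × Fin No) (Fin Na × Fin No) ℝ :=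
  (-d + u * α) • (1 : Matrix (Fin Na × Fin No) (Fin Na × Fin No) ℝ)
    + (u * γ) • (Aa ⊗ₖ (1 : Matrix (Fin No) (Fin No) ℝ))
    + (u * β) • ((1 : Matrix (Fin Na) (Fin Na) ℝ) ⊗ₖ Ao)
    + (u * δ) • (Aa ⊗ₖ Ao)

/-- A switching matrix: a diagonal real matrix whose diagonal entries are `1` or `-1`. -/
def IsSwitching {n : Type*} [Fintype n] [DecidableEq n] (M : Matrix n n ℝ) : Prop :=
  ∃ f : n → ℝ, (∀ i, f i = 1 ∨ f i = -1) ∧ M = Matrix.diagonal f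

/-- A real square matrix `B` is eventually positive if all entries of `B ^ k` are
strictly positive for all sufficiently large `k`. -/
def EventuallyPos {n : Type*} [Fintype n] [DecidableEq n] (B : Matrix n n ℝ) : Prop :=
  ∃ k₀ : ℕ, 0 < k₀ ∧ ∀ k ≥ k₀, ∀ i j, 0 < (B ^ k) i j

/-- The spectral radius of a real square matrix: the maximal modulus of its complex
eigenvalues. -/
noncomputable def specRad {n : Type*} [Fintype n] [DecidableEq n]
    (M : Matrix n n ℝ) : ℝ :=
  sSup {x : ℝ | ∃ z ∈ specC M, x = ‖z‖}

/-- The generating map `η(u, λ, μ) = −d + u(α + γλ + βμ + δλμ)`. -/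
noncomputable def ηgen (d u α γ β δ : ℝ) (l m : ℂ) : ℂ :=
  -(d : ℂ) + (u : ℂ) * ((α : ℂ) + (γ : ℂ) * l + (β : ℂ) * m + (δ : ℂ) * l * m)

/-!
Every `η(u, λ_a, μ_o)` is an eigenvalue of `J(u)`, with eigenvector `v ⊗ w` built from
eigenvectors of `A_a` and `A_o`. Conjugating by the switching matrix does not change the
spectrum, so by Perron–Frobenius for the eventually positive `M A_o M`, `μ = ρ(A_o)` is an
eigenvalue and every other eigenvalue `μ_o` satisfies `Re μ_o < μ`.

For the Perron step, let `B` be eventually positive with spectral radius `ρ` and let `v` be an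
eigenvector for an eigenvalue `z` with `|z| = ρ`. Then `|v|` is subinvariant, `ρ^k |v| ≤ P |v|`,
for each positive power `P = B^k`. Strict inequality would give a positive `y` with `c y ≤ P y`
for some `c > ρ^k`, and the positivity of `P` would force `trace (P^M)` to grow like `c^M`; but
the trace is the sum of the `M`-th powers of the eigenvalues, so it is at most `n ρ^(kM)`.

Once `β` times the spectral gap `min (μ - Re μ_o)` exceeds `δ ρ(A_a) μ`, the real part of
`α + γλ' + βμ' + δλ'μ'` is therefore maximised exactly at `(λ, μ)` and `(λ̄, μ)`. The imaginary
part of `η(u, λ, μ)` is `u (γ + δμ) Im λ > 0`.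
-/

open Filter Topology ComplexConjugate

section Spectrum

variable {n : Type*} [Fintype n]

theorem map_ofReal_mul (A B : Matrix n n ℝ) :
    (A * B).map ofReal = A.map ofReal * B.map ofReal :=
  Matrix.map_mul (f := ofRealHom)

variable [DecidableEq n]

theorem map_ofReal_pow (A : Matrix n n ℝ) (k : ℕ) : (A ^ k).map ofReal = A.map ofReal ^ k :=
  Matrix.map_pow A ofRealHom k

theorem specC_eq_spectrum (A : Matrix n n ℝ) : specC A = spectrum ℂ (A.map ofReal) := by
  ext z
  exact Matrix.mem_spectrum_iff_isRoot_charpoly.symm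

theorem mem_specC_iff {A : Matrix n n ℝ} {z : ℂ} :
    z ∈ specC A ↔ ∃ v ≠ 0, A.map ofReal *ᵥ v = z • v := by
  rw [specC, Set.mem_ofPred_eq, IsRoot, eval_charpoly, ← exists_mulVec_eq_zero_iff]
  simp [sub_mulVec, sub_eq_zero, eq_comm]

theorem specC_finite (A : Matrix n n ℝ) : (specC A).Finite :=
  finite_setOfPred_isRoot (charpoly_monic _).ne_zero

theorem specC_nonempty [Nonempty n] (A : Matrix n n ℝ) : (specC A).Nonempty := by
  rw [specC_eq_spectrum]
  exact spectrum.nonempty_of_isAlgClosed_of_finiteDimensional ℂ _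

theorem specC_pow (A : Matrix n n ℝ) {k : ℕ} (hk : 0 < k) :
    specC (A ^ k) = (· ^ k) '' specC A := by
  rw [specC_eq_spectrum, specC_eq_spectrum, ← spectrum.map_pow_of_pos _ hk, map_ofReal_pow]

theorem ofReal_mem_specC {A : Matrix n n ℝ} {x : n → ℝ} {r : ℝ} (hx : x ≠ 0)
    (h : A *ᵥ x = r • x) : (r : ℂ) ∈ specC A := by
  refine mem_specC_iff.2 ⟨ofReal ∘ x, fun h0 => hx (funext fun i => ?_), funext fun i => ?_⟩
  · simpa using congrFun h0 i
  · change (A.map ofRealHom *ᵥ ofRealHom ∘ x) i = _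
    simp [← RingHom.map_mulVec, h]

theorem conj_mem_specC {A : Matrix n n ℝ} {z : ℂ} (hz : z ∈ specC A) :
    conj z ∈ specC A := by
  obtain ⟨v, hv, hAv⟩ := mem_specC_iff.1 hz
  refine mem_specC_iff.2
    ⟨fun i => conj (v i), fun h0 => hv (funext fun i => ?_), funext fun i => ?_⟩
  · simpa using congrArg conj (congrFun h0 i)
  · simpa [mulVec, dotProduct, map_sum, mul_comm] using congrArg conj (congrFun hAv i)

theorem specC_mul_mul_of_mul_self_eq_one {A S : Matrix n n ℝ} (hS : S * S = 1) :
    specC (S * A * S) = specC A := by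
  have hSc : S.map ofReal * S.map ofReal = 1 := by
    rw [← map_ofReal_mul, hS]; exact Matrix.map_one _ (by simp) (by simp)
  rw [specC_eq_spectrum, specC_eq_spectrum, map_ofReal_mul, map_ofReal_mul]
  exact spectrum.units_conjugate (u := ⟨S.map ofReal, S.map ofReal, hSc, hSc⟩)

theorem IsSwitching.mul_self {S : Matrix n n ℝ} (hS : IsSwitching S) : S * S = 1 := by
  obtain ⟨f, hf, rfl⟩ := hS
  rw [diagonal_mul_diagonal, ← diagonal_one]
  congr 1
  funext i
  rcases hf i with h | h <;> simp [h]

end Spectrum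

theorem Complex.re_lt_of_norm_le_of_ne {z : ℂ} {r : ℝ} (hz : ‖z‖ ≤ r) (hne : z ≠ r) : z.re < r := by
  refine (z.re_le_norm.trans hz).lt_of_ne fun h => hne ?_
  have him : z.im = 0 := Complex.abs_re_eq_norm.1 <| le_antisymm (abs_re_le_norm z) <| by
    rwa [h, abs_of_nonneg ((norm_nonneg z).trans hz)]
  exact Complex.ext (by simpa using h) (by simpa using him)

theorem Set.Finite.exists_pos_le {α : Type*} {s : Set α} (hs : s.Finite) {f : α → ℝ}
    (hf : ∀ x ∈ s, 0 < f x) : ∃ g > 0, ∀ x ∈ s, g ≤ f x := by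
  rcases s.eq_empty_or_nonempty with rfl | hne
  · exact ⟨1, one_pos, by simp⟩
  · obtain ⟨a, ha, hmin⟩ := Set.exists_min_image s f hs hne
    exact ⟨f a, hf a ha, hmin⟩

section SpectralRadius

variable {n : Type*} [Fintype n] [DecidableEq n]

theorem specRad_eq_sSup_image (A : Matrix n n ℝ) : specRad A = sSup ((‖·‖) '' specC A) := by
  rw [specRad]
  congr 1
  ext x
  simp [eq_comm]

theorem norm_le_specRad {A : Matrix n n ℝ} {z : ℂ} (hz : z ∈ specC A) : ‖z‖ ≤ specRad A := by
  rw [specRad_eq_sSup_image]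
  exact le_csSup ((specC_finite A).image _).bddAbove (Set.mem_image_of_mem _ hz)

theorem specRad_nonneg (A : Matrix n n ℝ) : 0 ≤ specRad A := by
  rw [specRad_eq_sSup_image]
  exact Real.sSup_nonneg (by simp)

theorem exists_norm_eq_specRad {A : Matrix n n ℝ} (hA : 0 < specRad A) :
    ∃ z ∈ specC A, ‖z‖ = specRad A := by
  rw [specRad_eq_sSup_image] at hA ⊢
  have hne : ((‖·‖) '' specC A).Nonempty := by
    by_contra h
    simp [Set.not_nonempty_iff_eq_empty.1 h] at hA
  exact hne.csSup_mem ((specC_finite A).image _)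

theorem specRad_mul_mul_of_mul_self_eq_one {A S : Matrix n n ℝ} (hS : S * S = 1) :
    specRad (S * A * S) = specRad A := by
  rw [specRad, specRad, specC_mul_mul_of_mul_self_eq_one hS]

theorem exists_pos_le_specRad_sub_re (A : Matrix n n ℝ) :
    ∃ g > 0, ∀ m ∈ specC A, m ≠ specRad A → g ≤ specRad A - m.re := by
  obtain ⟨g, hg, hgap⟩ := ((specC_finite A).sdiff (t := {(specRad A : ℂ)})).exists_pos_le
    (f := fun m => specRad A - m.re) fun m hm =>
      sub_pos.2 (re_lt_of_norm_le_of_ne (norm_le_specRad hm.1) hm.2)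
  exact ⟨g, hg, fun m hm hne => hgap m ⟨hm, hne⟩⟩

end SpectralRadius

section Kronecker

variable {R : Type*} [CommSemiring R] {m n : Type*} [Fintype m] [Fintype n]

theorem kroneckerMap_mulVec_mul (A : Matrix m m R) (B : Matrix n n R) (v : m → R) (w : n → R) :
    (A ⊗ₖ B) *ᵥ (fun p => v p.1 * w p.2) = fun p => (A *ᵥ v) p.1 * (B *ᵥ w) p.2 := by
  funext p
  simp only [mulVec, dotProduct, kroneckerMap_apply, Fintype.sum_prod_type, Finset.sum_mul_sum]
  exact Finset.sum_congr rfl fun _ _ => Finset.sum_congr rfl fun _ _ => by ring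

end Kronecker

theorem Jmat_map_ofReal {Na No : ℕ} (Aa : Matrix (Fin Na) (Fin Na) ℝ)
    (Ao : Matrix (Fin No) (Fin No) ℝ) (d u α γ β δ : ℝ) :
    (Jmat Aa Ao d u α γ β δ).map ofReal
      = ((-d + u * α : ℝ) : ℂ) • (1 : Matrix (Fin Na × Fin No) (Fin Na × Fin No) ℂ)
        + ((u * γ : ℝ) : ℂ) • (Aa.map ofReal ⊗ₖ (1 : Matrix (Fin No) (Fin No) ℂ))
        + ((u * β : ℝ) : ℂ) • ((1 : Matrix (Fin Na) (Fin Na) ℂ) ⊗ₖ Ao.map ofReal)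
        + ((u * δ : ℝ) : ℂ) • (Aa.map ofReal ⊗ₖ Ao.map ofReal) := by
  ext ⟨i, j⟩ ⟨k, l⟩
  simp only [Jmat, Matrix.map_apply, Matrix.add_apply, Matrix.smul_apply, kroneckerMap_apply,
    one_apply, Prod.mk.injEq, smul_eq_mul]
  split_ifs <;> push_cast <;> ring

theorem ηgen_mem_specC_Jmat {Na No : ℕ} {Aa : Matrix (Fin Na) (Fin Na) ℝ}
    {Ao : Matrix (Fin No) (Fin No) ℝ} (d u α γ β δ : ℝ) {l m : ℂ}
    (hl : l ∈ specC Aa) (hm : m ∈ specC Ao) :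
    ηgen d u α γ β δ l m ∈ specC (Jmat Aa Ao d u α γ β δ) := by
  obtain ⟨v, hv, hAv⟩ := mem_specC_iff.1 hl
  obtain ⟨w, hw, hAw⟩ := mem_specC_iff.1 hm
  obtain ⟨i, hi⟩ := Function.ne_iff.1 hv
  obtain ⟨j, hj⟩ := Function.ne_iff.1 hw
  refine mem_specC_iff.2
    ⟨fun p => v p.1 * w p.2, fun h0 => mul_ne_zero hi hj (congrFun h0 (i, j)), ?_⟩
  simp only [Jmat_map_ofReal, add_mulVec, smul_mulVec, one_mulVec, kroneckerMap_mulVec_mul,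
    hAv, hAw]
  funext p
  simp only [Pi.add_apply, Pi.smul_apply, smul_eq_mul, ηgen]
  push_cast
  ring

theorem le_of_forall_mul_pow_le_mul_pow {C D c ρ : ℝ} (hC : 0 < C) (hρ : 0 ≤ ρ)
    (h : ∀ M : ℕ, C * c ^ M ≤ D * ρ ^ M) : c ≤ ρ := by
  by_contra! hlt
  have hc : 0 < c := hρ.trans_lt hlt
  have hlim : Tendsto (fun M : ℕ => D * (ρ / c) ^ M) atTop (𝓝 0) := by
    simpa using (tendsto_pow_atTop_nhds_zero_of_lt_one (div_nonneg hρ hc.le)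
      ((div_lt_one hc).2 hlt)).const_mul D
  obtain ⟨M, hM⟩ := (hlim.eventually (gt_mem_nhds hC)).exists
  rw [div_pow, ← mul_div_assoc, div_lt_iff₀ (pow_pos hc M)] at hM
  linarith [h M]

theorem pow_mulVec_of_mulVec_eq_smul {R n : Type*} [CommSemiring R] [Fintype n] [DecidableEq n]
    {A : Matrix n n R} {v : n → R} {z : R} (h : A *ᵥ v = z • v) (k : ℕ) :
    (A ^ k) *ᵥ v = z ^ k • v := by
  induction k with
  | zero => simp
  | succ k ih => rw [pow_succ', ← mulVec_mulVec, ih, mulVec_smul, h, smul_smul, pow_succ]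

section Perron

variable {n : Type*} [Fintype n]

theorem mulVec_pos {P : Matrix n n ℝ} (hP : ∀ i j, 0 < P i j) {x : n → ℝ} (hx : 0 ≤ x)
    (hx0 : x ≠ 0) (i : n) : 0 < (P *ᵥ x) i := by
  obtain ⟨j, hj⟩ := Function.ne_iff.1 hx0
  calc 0 < P i j * x j := mul_pos (hP i j) ((hx j).lt_of_ne' hj)
    _ ≤ ∑ k, P i k * x k :=
        Finset.single_le_sum (fun k _ => mul_nonneg (hP i k).le (hx k)) (Finset.mem_univ j)

theorem mulVec_mono {P : Matrix n n ℝ} (hP : ∀ i j, 0 ≤ P i j) {x y : n → ℝ} (hxy : x ≤ y) :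
    P *ᵥ x ≤ P *ᵥ y := fun i =>
  Finset.sum_le_sum fun j _ => mul_le_mul_of_nonneg_left (hxy j) (hP i j)

theorem norm_smul_le_mulVec_norm {P : Matrix n n ℝ} (hP : ∀ i j, 0 ≤ P i j) {v : n → ℂ} {z : ℂ}
    (h : P.map ofReal *ᵥ v = z • v) : ‖z‖ • (fun i => ‖v i‖) ≤ P *ᵥ fun i => ‖v i‖ := fun i =>
  calc ‖z‖ * ‖v i‖ = ‖(P.map ofReal *ᵥ v) i‖ := by rw [h]; simp
    _ ≤ ∑ j, ‖(P i j : ℂ) * v j‖ := norm_sum_le _ _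
    _ = (P *ᵥ fun i => ‖v i‖) i := by simp [mulVec, dotProduct, abs_of_nonneg (hP _ _)]

variable [DecidableEq n]

theorem trace_pow_le {P : Matrix n n ℝ} {ρ : ℝ} (hρ : ∀ z ∈ specC P, ‖z‖ ≤ ρ) {m : ℕ}
    (hm : 0 < m) : (P ^ m).trace ≤ Fintype.card n * ρ ^ m := by
  set Q := (P ^ m).map ofReal
  have hroots : ∀ w ∈ Q.charpoly.roots, ‖w‖ ≤ ρ ^ m := by
    intro w hw
    have hw' : w ∈ specC (P ^ m) := isRoot_of_mem_roots hw
    rw [specC_pow P hm] at hw'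
    obtain ⟨z, hz, rfl⟩ := hw'
    rw [norm_pow]
    exact pow_le_pow_left₀ (norm_nonneg z) (hρ z hz) m
  have hcard : Multiset.card Q.charpoly.roots = Fintype.card n := by
    rw [IsAlgClosed.card_roots_eq_natDegree, charpoly_natDegree_eq_dim]
  calc (P ^ m).trace ≤ ‖((P ^ m).trace : ℂ)‖ := by
        rw [Complex.norm_real, Real.norm_eq_abs]; exact le_abs_self _
    _ = ‖Q.charpoly.roots.sum‖ := by
        rw [← trace_eq_sum_roots_charpoly]
        exact congrArg _ (AddMonoidHom.map_trace ofRealHom (P ^ m))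
    _ ≤ (Q.charpoly.roots.map (‖·‖)).sum := norm_multiset_sum_le _
    _ ≤ Multiset.card (Q.charpoly.roots.map (‖·‖)) • ρ ^ m :=
        Multiset.sum_le_card_nsmul _ _ fun x hx => by
          obtain ⟨w, hw, rfl⟩ := Multiset.mem_map.1 hx
          exact hroots w hw
    _ = Fintype.card n * ρ ^ m := by rw [Multiset.card_map, hcard, nsmul_eq_mul]

theorem pow_smul_le_pow_mulVec {P : Matrix n n ℝ} (hP : ∀ i j, 0 ≤ P i j) {y : n → ℝ} {c : ℝ}
    (hc : 0 ≤ c) (h : c • y ≤ P *ᵥ y) (M : ℕ) : c ^ M • y ≤ (P ^ M) *ᵥ y := by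
  induction M with
  | zero => simp
  | succ M ih =>
    calc c ^ (M + 1) • y = c ^ M • (c • y) := by rw [pow_succ, mul_smul, smul_comm]
      _ ≤ c ^ M • (P *ᵥ y) := smul_le_smul_of_nonneg_left h (pow_nonneg hc M)
      _ = P *ᵥ (c ^ M • y) := (mulVec_smul P _ y).symm
      _ ≤ P *ᵥ ((P ^ M) *ᵥ y) := mulVec_mono hP ih
      _ = (P ^ (M + 1)) *ᵥ y := by rw [mulVec_mulVec, pow_succ']

theorem le_of_smul_le_mulVec [Nonempty n] {P : Matrix n n ℝ} (hP : ∀ i j, 0 < P i j)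
    {y : n → ℝ} (hy : ∀ i, 0 < y i) {c ρ : ℝ} (hc : c • y ≤ P *ᵥ y)
    (hρ : ∀ z ∈ specC P, ‖z‖ ≤ ρ) : c ≤ ρ := by
  obtain ⟨z, hz⟩ := specC_nonempty P
  have hρ0 : 0 ≤ ρ := (norm_nonneg z).trans (hρ z hz)
  rcases le_or_gt c 0 with hc0 | hc0
  · exact hc0.trans hρ0
  obtain ⟨t, ht, hty⟩ := Set.finite_univ.exists_pos_le (f := fun p : n × n => P p.1 p.2 / y p.1)
    fun p _ => div_pos (hP _ _) (hy _)
  have hty' : ∀ i j, t * y j ≤ P j i := fun i j =>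
    (le_div_iff₀ (hy j)).1 (hty (j, i) (Set.mem_univ _))
  have hY : 0 < ∑ i, y i := Finset.sum_pos (fun i _ => hy i) Finset.univ_nonempty
  refine le_of_forall_mul_pow_le_mul_pow (mul_pos ht hY) hρ0 (D := Fintype.card n * ρ) fun M => ?_
  have hPM := pow_smul_le_pow_mulVec (fun i j => (hP i j).le) hc0.le hc M
  calc t * (∑ i, y i) * c ^ M = t * ∑ i, c ^ M * y i := by
        rw [Finset.mul_sum, Finset.mul_sum, Finset.sum_mul]
        exact Finset.sum_congr rfl fun i _ => by ring
    _ ≤ t * ∑ i, ((P ^ M) *ᵥ y) i := by gcongr with i; exact hPM i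
    _ = ∑ i, ∑ j, (P ^ M) i j * (t * y j) := by
        simp only [mulVec, dotProduct, Finset.mul_sum]; ring_nf
    _ ≤ ∑ i, ∑ j, (P ^ M) i j * P j i := by
        gcongr with i _ j _
        · exact Matrix.pow_apply_nonneg (fun i j => (hP i j).le) M i j
        · exact hty' i j
    _ = (P ^ (M + 1)).trace := by simp [trace, pow_succ, mul_apply]
    _ ≤ Fintype.card n * ρ ^ (M + 1) := trace_pow_le hρ M.succ_pos
    _ = Fintype.card n * ρ * ρ ^ M := by ring

theorem mulVec_eq_smul_of_smul_le_mulVec {P : Matrix n n ℝ} (hP : ∀ i j, 0 < P i j)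
    {x : n → ℝ} (hx : 0 ≤ x) {ρ : ℝ} (hρ : ∀ z ∈ specC P, ‖z‖ ≤ ρ) (h : ρ • x ≤ P *ᵥ x) :
    P *ᵥ x = ρ • x := by
  by_contra hne
  have hx0 : x ≠ 0 := by rintro rfl; simp at hne
  obtain ⟨i₀, -⟩ := Function.ne_iff.1 hx0
  have : Nonempty n := ⟨i₀⟩
  set s := P *ᵥ x - ρ • x with hs
  have hy := mulVec_pos hP hx hx0
  have hPs := mulVec_pos hP (sub_nonneg.2 h) (sub_ne_zero.2 hne)
  obtain ⟨ε, hε, hεle⟩ := Set.finite_univ.exists_pos_le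
    (f := fun i => (P *ᵥ s) i / (P *ᵥ x) i) fun i _ => div_pos (hPs i) (hy i)
  have hgrow : (ρ + ε) • (P *ᵥ x) ≤ P *ᵥ (P *ᵥ x) := by
    intro i
    have hsplit : P *ᵥ (P *ᵥ x) = ρ • (P *ᵥ x) + P *ᵥ s := by
      rw [hs, mulVec_sub, mulVec_smul, add_sub_cancel]
    have hεi := (le_div_iff₀ (hy i)).1 (hεle i (Set.mem_univ i))
    simp only [hsplit, Pi.add_apply, Pi.smul_apply, smul_eq_mul]
    linarith
  linarith [le_of_smul_le_mulVec hP hy hgrow hρ]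

theorem specRad_mem_specC_of_eventuallyPos {B : Matrix n n ℝ} (hB : EventuallyPos B)
    (hr : 0 < specRad B) : (specRad B : ℂ) ∈ specC B := by
  obtain ⟨k, hk, hpos⟩ := hB
  obtain ⟨z, hz, hzr⟩ := exists_norm_eq_specRad hr
  obtain ⟨v, hv, hBv⟩ := mem_specC_iff.1 hz
  set x : n → ℝ := fun i => ‖v i‖
  have hx0 : x ≠ 0 := fun h => hv (funext fun i => norm_eq_zero.1 (congrFun h i))
  have hfix : ∀ j ≥ k, B ^ j *ᵥ x = specRad B ^ j • x := by
    intro j hj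
    refine mulVec_eq_smul_of_smul_le_mulVec (hpos j hj) (fun i => norm_nonneg _) ?_ ?_
    · intro w hw
      obtain ⟨y, hy, rfl⟩ := (specC_pow B (hk.trans_le hj)).le hw
      rw [norm_pow]
      exact pow_le_pow_left₀ (norm_nonneg y) (norm_le_specRad hy) j
    · have hBjv : (B ^ j).map ofReal *ᵥ v = z ^ j • v := by
        rw [map_ofReal_pow, pow_mulVec_of_mulVec_eq_smul hBv]
      simpa [norm_pow, hzr] using norm_smul_le_mulVec_norm (fun i l => (hpos j hj i l).le) hBjv
  have hBx : B *ᵥ x = specRad B • x := by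
    have h := hfix (k + 1) (by omega)
    rw [pow_succ', ← mulVec_mulVec, hfix k le_rfl, mulVec_smul, pow_succ, mul_smul] at h
    exact smul_right_injective _ (pow_ne_zero k hr.ne') h
  exact ofReal_mem_specC hx0 hBx

theorem specRad_mem_specC_of_isSwitching {A S : Matrix n n ℝ} (hS : IsSwitching S)
    (hA : EventuallyPos (S * A * S)) (hr : 0 < specRad A) : (specRad A : ℂ) ∈ specC A := by
  have hSS := hS.mul_self
  rw [← specRad_mul_mul_of_mul_self_eq_one hSS] at hr ⊢
  rw [← specC_mul_mul_of_mul_self_eq_one hSS]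
  exact specRad_mem_specC_of_eventuallyPos hA hr

end Perron

/-- The factor `α + γλ + βμ + δλμ` of `η(u, λ, μ)`, whose real part, maximised
over the spectra, is the paper's `K`. -/
noncomputable def Kgen (α γ β δ : ℝ) (l m : ℂ) : ℂ :=
  (α : ℂ) + (γ : ℂ) * l + (β : ℂ) * m + (δ : ℂ) * l * m

section Kgen

variable {α γ β δ : ℝ}

theorem ηgen_re (d u : ℝ) (l m : ℂ) :
    (ηgen d u α γ β δ l m).re = -d + u * (Kgen α γ β δ l m).re := by
  simp [ηgen, Kgen]

theorem Kgen_re (l m : ℂ) :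
    (Kgen α γ β δ l m).re = α + γ * l.re + β * m.re + δ * (l * m).re := by
  simp [Kgen, mul_assoc]

theorem Kgen_re_ofReal (l : ℂ) (μ : ℝ) :
    (Kgen α γ β δ l μ).re = α + β * μ + (γ + δ * μ) * l.re := by
  rw [Kgen_re, ofReal_re, re_mul_ofReal]
  ring

theorem ηgen_im_ofReal (d u : ℝ) (l : ℂ) (μ : ℝ) :
    (ηgen d u α γ β δ l μ).im = u * (γ + δ * μ) * l.im := by
  simp [ηgen]
  ring

theorem ηgen_conj_ofReal (d u : ℝ) (l : ℂ) (μ : ℝ) :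
    ηgen d u α γ β δ (conj l) μ = conj (ηgen d u α γ β δ l μ) := by
  simp [ηgen]

variable {μ R : ℝ} {lam l m : ℂ}

theorem Kgen_re_lt_of_re_lt (hγδ : 0 < γ + δ * μ) (h : l.re < lam.re) :
    (Kgen α γ β δ l μ).re < (Kgen α γ β δ lam μ).re := by
  rw [Kgen_re_ofReal, Kgen_re_ofReal]
  nlinarith

theorem Kgen_re_lt_of_gap (hγ : 0 ≤ γ) (hδ : 0 ≤ δ) (hlam : 0 ≤ lam.re)
    (hl : l.re ≤ lam.re) (hlR : ‖l‖ ≤ R) (hm : ‖m‖ ≤ μ) (hβ : δ * R * μ < β * (μ - m.re)) :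
    (Kgen α γ β δ l m).re < (Kgen α γ β δ lam μ).re := by
  have hμ : 0 ≤ μ := (norm_nonneg m).trans hm
  have hlm : (l * m).re ≤ R * μ := calc
    (l * m).re ≤ ‖l‖ * ‖m‖ := (re_le_norm _).trans (norm_mul l m).le
    _ ≤ R * μ := mul_le_mul hlR hm (norm_nonneg m) ((norm_nonneg l).trans hlR)
  rw [Kgen_re, Kgen_re_ofReal]
  nlinarith [mul_le_mul_of_nonneg_left hl hγ, mul_le_mul_of_nonneg_left hlm hδ,
    mul_nonneg (mul_nonneg hδ hμ) hlam]

variable {Sa So : Set ℂ}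

theorem Kgen_re_lt_of_leading (hγ : 0 ≤ γ) (hδ : 0 ≤ δ) (hγδ : 0 < γ + δ * μ) (hlam : 0 ≤ lam.re)
    (hlead : ∀ la ∈ Sa, la.re ≤ lam.re ∧ (la.re = lam.re → la = lam ∨ la = conj lam))
    (hSa : ∀ l ∈ Sa, ‖l‖ ≤ R) (hSo : ∀ m ∈ So, ‖m‖ ≤ μ)
    (hgap : ∀ m ∈ So, m ≠ μ → δ * R * μ < β * (μ - m.re)) :
    ∀ l ∈ Sa, ∀ m ∈ So, ¬(l = lam ∧ m = μ) → ¬(l = conj lam ∧ m = μ) →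
      (Kgen α γ β δ l m).re < (Kgen α γ β δ lam μ).re := by
  intro l hl m hm h₁ h₂
  by_cases hmμ : m = μ
  · subst hmμ
    refine Kgen_re_lt_of_re_lt hγδ ((hlead l hl).1.lt_of_ne fun h => ?_)
    rcases (hlead l hl).2 h with rfl | rfl
    exacts [h₁ ⟨rfl, rfl⟩, h₂ ⟨rfl, rfl⟩]
  · exact Kgen_re_lt_of_gap hγ hδ hlam (hlead l hl).1 (hSa l hl) (hSo m hm) (hgap m hm hmμ)

theorem isGreatest_Kgen_re (hlamSa : lam ∈ Sa) (hμSo : (μ : ℂ) ∈ So)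
    (hlt : ∀ l ∈ Sa, ∀ m ∈ So, ¬(l = lam ∧ m = μ) → ¬(l = conj lam ∧ m = μ) →
      (Kgen α γ β δ l m).re < (Kgen α γ β δ lam μ).re) :
    IsGreatest {x : ℝ | ∃ l ∈ Sa, ∃ m ∈ So, x = (Kgen α γ β δ l m).re}
      (Kgen α γ β δ lam μ).re := by
  refine ⟨⟨lam, hlamSa, μ, hμSo, rfl⟩, ?_⟩
  rintro x ⟨l, hl, m, hm, rfl⟩
  by_cases h₁ : l = lam ∧ m = μ
  · rw [h₁.1, h₁.2]
  by_cases h₂ : l = conj lam ∧ m = μ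
  · rw [h₂.1, h₂.2, Kgen_re_ofReal, Kgen_re_ofReal, conj_re]
  exact (hlt l hl m hm h₁ h₂).le

end Kgen

theorem oscillation_graphs_beta_general {Na No : ℕ}
    (Aa : Matrix (Fin Na) (Fin Na) ℝ) (Ao : Matrix (Fin No) (Fin No) ℝ)
    (d u α γ δ : ℝ) (hu : 0 < u) (hα : 0 ≤ α) (hγ : 0 ≤ γ) (hδ : 0 ≤ δ)
    (M : Matrix (Fin No) (Fin No) ℝ) (hM : IsSwitching M)
    (hEp : EventuallyPos (M * Ao * M))
    (mu : ℝ) (hmu : mu = specRad Ao) (hmupos : 0 < mu)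
    (hγδ : 0 < γ + δ * mu)
    (lam : ℂ) (hlam : lam ∈ specC Aa) (hlamim : 0 < lam.im) (hlamre : 0 < lam.re)
    (hlamlead : ∀ la ∈ specC Aa, la.re ≤ lam.re ∧
      (la.re = lam.re → la = lam ∨ la = (starRingEnd ℂ) lam)) :
    ∃ βstar : ℝ, 0 ≤ βstar ∧ ∀ β : ℝ, βstar < β →
      (∀ la ∈ specC Aa, ∀ μo ∈ specC Ao,
        ¬(la = lam ∧ μo = (mu : ℂ)) → ¬(la = (starRingEnd ℂ) lam ∧ μo = (mu : ℂ)) →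
        (ηgen d u α γ β δ la μo).re < (ηgen d u α γ β δ lam (mu : ℂ)).re) ∧
      (ηgen d u α γ β δ lam (mu : ℂ) ∈ specC (Jmat Aa Ao d u α γ β δ)) ∧
      (ηgen d u α γ β δ ((starRingEnd ℂ) lam) (mu : ℂ) ∈ specC (Jmat Aa Ao d u α γ β δ)) ∧
      (ηgen d u α γ β δ ((starRingEnd ℂ) lam) (mu : ℂ)
        = (starRingEnd ℂ) (ηgen d u α γ β δ lam (mu : ℂ))) ∧
      ((ηgen d u α γ β δ lam (mu : ℂ)).im ≠ 0) ∧
      IsGreatest {x : ℝ | ∃ l ∈ specC Aa, ∃ m ∈ specC Ao,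
          x = ((α : ℂ) + (γ : ℂ) * l + (β : ℂ) * m + (δ : ℂ) * l * m).re}
        (α + γ * lam.re + β * mu + δ * mu * lam.re) ∧
      0 < α + γ * lam.re + β * mu + δ * mu * lam.re := by
  subst hmu
  have hmuAo := specRad_mem_specC_of_isSwitching hM hEp hmupos
  obtain ⟨g, hg, hgap⟩ := exists_pos_le_specRad_sub_re Ao
  have hβstar : 0 ≤ δ * specRad Aa * specRad Ao / g := by
    have := specRad_nonneg Aa
    positivity
  refine ⟨_, hβstar, fun β hβ => ?_⟩
  have hβ0 : 0 < β := hβstar.trans_lt hβ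
  have hlt := Kgen_re_lt_of_leading (α := α) hγ hδ hγδ hlamre.le hlamlead
    (fun l hl => norm_le_specRad hl) (fun m hm => norm_le_specRad hm) fun m hm hne =>
      ((div_lt_iff₀ hg).1 hβ).trans_le (mul_le_mul_of_nonneg_left (hgap m hm hne) hβ0.le)
  have hK : (Kgen α γ β δ lam (specRad Ao)).re
      = α + γ * lam.re + β * specRad Ao + δ * specRad Ao * lam.re := by
    rw [Kgen_re_ofReal]; ring
  refine ⟨fun la hla μo hμo h₁ h₂ => ?_, ηgen_mem_specC_Jmat d u α γ β δ hlam hmuAo,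
    ηgen_mem_specC_Jmat d u α γ β δ (conj_mem_specC hlam) hmuAo, ηgen_conj_ofReal d u lam _,
    ?_, hK ▸ isGreatest_Kgen_re hlam hmuAo hlt, ?_⟩
  · rw [ηgen_re, ηgen_re]
    gcongr
    exact hlt la hla μo hμo h₁ h₂
  · rw [ηgen_im_ofReal]
    exact (mul_pos (mul_pos hu hγδ) hlamim).ne'
  · nlinarith [mul_pos hβ0 hmupos, mul_nonneg hγ hlamre.le, mul_nonneg hδ hmupos.le]

/-- Proposition 4 (β version): if `A_o` is switching-equivalent to an eventually
positive matrix with spectral radius `μ > 0`, and `A_a` has a non-real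
complex-conjugate pair of leading eigenvalues `λ, λ̄` with positive real part, then for
all large enough `β` the leading eigenvalues of `J(u)` are the non-real
complex-conjugate pair `η(u, λ, μ), η(u, λ̄, μ)`, and
`K = α + γ Re(λ) + βμ + δμ Re(λ) > 0`. -/
theorem oscillation_graphs_beta {Na No : ℕ} (hNa : 1 ≤ Na) (hNo : 1 ≤ No)
    (Aa : Matrix (Fin Na) (Fin Na) ℝ) (Ao : Matrix (Fin No) (Fin No) ℝ)
    (d u α γ δ : ℝ) (hd : 0 < d) (hu : 0 < u) (hα : 0 ≤ α) (hγ : 0 ≤ γ) (hδ : 0 ≤ δ)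
    (M : Matrix (Fin No) (Fin No) ℝ) (hM : IsSwitching M)
    (hEp : EventuallyPos (M * Ao * M))
    (mu : ℝ) (hmu : mu = specRad Ao) (hmupos : 0 < mu)
    (hγδ : 0 < γ + δ * mu)
    (lam : ℂ) (hlam : lam ∈ specC Aa) (hlamim : 0 < lam.im) (hlamre : 0 < lam.re)
    (hlamlead : ∀ la ∈ specC Aa, la.re ≤ lam.re ∧
      (la.re = lam.re → la = lam ∨ la = (starRingEnd ℂ) lam)) :
    ∃ βstar : ℝ, 0 ≤ βstar ∧ ∀ β : ℝ, βstar < β →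
      (∀ la ∈ specC Aa, ∀ μo ∈ specC Ao,
        ¬(la = lam ∧ μo = (mu : ℂ)) → ¬(la = (starRingEnd ℂ) lam ∧ μo = (mu : ℂ)) →
        (ηgen d u α γ β δ la μo).re < (ηgen d u α γ β δ lam (mu : ℂ)).re) ∧
      (ηgen d u α γ β δ lam (mu : ℂ) ∈ specC (Jmat Aa Ao d u α γ β δ)) ∧
      (ηgen d u α γ β δ ((starRingEnd ℂ) lam) (mu : ℂ) ∈ specC (Jmat Aa Ao d u α γ β δ)) ∧
      (ηgen d u α γ β δ ((starRingEnd ℂ) lam) (mu : ℂ)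
        = (starRingEnd ℂ) (ηgen d u α γ β δ lam (mu : ℂ))) ∧
      ((ηgen d u α γ β δ lam (mu : ℂ)).im ≠ 0) ∧
      IsGreatest {x : ℝ | ∃ l ∈ specC Aa, ∃ m ∈ specC Ao,
          x = ((α : ℂ) + (γ : ℂ) * l + (β : ℂ) * m + (δ : ℂ) * l * m).re}
        (α + γ * lam.re + β * mu + δ * mu * lam.re) ∧
      0 < α + γ * lam.re + β * mu + δ * mu * lam.re :=
  oscillation_graphs_beta_general Aa Ao d u α γ δ hu hα hγ hδ M hM hEp mu hmu hmupos hγδ lam hlam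
    hlamim hlamre hlamlead
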